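/- Let p be a prime, g ∈ Z_p[[x]] invertible under composition (g(0)=0, g'(0) ∈ Z_p^×), and under the hypotheses of the previous setting (u with Weierstrass degree of u^{∘p^{n−δ}}(x)−x equal to p^n, π with v_p(π)=1/((p−1)p^n)), for each unit c ∈ Z_p^× there exists a unique integer 1 ≤ j ≤ p−1 such that g(u^{∘jp^{n−δ}}(π)) − g(π) ≡ c·π^{p^n} mod π^{p^n+1}. -/

import Mathlib

open PowerSeries Filter

noncomputable section

/-- Composition `f(g(x))` of formal power series (intended for `g` with zero constant term). -/
def compPS {R : Type*} [CommSemiring R] (f g : PowerSeries R) : PowerSeries R :=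
  PowerSeries.mk fun n =>
    ∑ k ∈ Finset.range (n + 1), PowerSeries.coeff k f * PowerSeries.coeff n (g ^ k)

/-- `n`-fold compositional iterate of a power series. -/
def iterPS {R : Type*} [CommSemiring R] (f : PowerSeries R) : ℕ → PowerSeries R
  | 0 => PowerSeries.X
  | n + 1 => compPS f (iterPS f n)

/-- Evaluation of a power series at a point of a normed field. -/
def evalT {R K : Type*} [CommSemiring R] [NormedField K] [Algebra R K]
    (f : PowerSeries R) (x : K) : K :=
  ∑' n : ℕ, algebraMap R K (PowerSeries.coeff n f) * x ^ n

/-!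
Write `q = p^(n-δ)`, `N = p^n` and `w = u^{∘q} - X`. Since the coefficients of `w` below `x^N`
lie in `pℤ_p` and `|π|^N ≥ 1/p`, the map `z ↦ u^{∘q}(z) = z + w(z)` moves every point of the disc
`|z - π| ≤ |π|^N` by `b π^N` up to an error of size `|π|^(N+1)`, where `b` is the unit `w_N`.
Hence `u^{∘jq}(π) ≡ π + j b π^N`, and linearizing `g` at `π` gives
`g(u^{∘jq}(π)) - g(π) - c π^N ≡ (j g'(0) b - c) π^N` modulo `π^(N+1)`. The left side is
`O(π^(N+1))` exactly when `j g'(0) b ≡ c (mod p)`, which has a unique solution in `[1, p-1]`.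
As `K` need not be complete, the series are summed in the finite extension `ℚ_p(π)`, which is.
-/

section Evaluation

variable {R F : Type*} [CommRing R] [NormedField F] [Algebra R F]

lemma norm_algebraMap_mul_pow_le (hR : ∀ a : R, ‖algebraMap R F a‖ ≤ 1) (a : R) (x : F)
    (n : ℕ) : ‖algebraMap R F a * x ^ n‖ ≤ ‖x‖ ^ n := by
  rw [norm_mul, norm_pow]
  exact mul_le_of_le_one_left (by positivity) (hR a)

lemma summable_norm_evalT (hR : ∀ a : R, ‖algebraMap R F a‖ ≤ 1) (f : R⟦X⟧) {x : F}
    (hx : ‖x‖ < 1) : Summable fun n => ‖algebraMap R F (coeff n f) * x ^ n‖ :=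
  .of_nonneg_of_le (fun _ => norm_nonneg _) (fun n => norm_algebraMap_mul_pow_le hR _ x n)
    (summable_geometric_of_lt_one (norm_nonneg x) hx)

lemma hasSum_evalT [CompleteSpace F] (hR : ∀ a : R, ‖algebraMap R F a‖ ≤ 1) (f : R⟦X⟧) {x : F}
    (hx : ‖x‖ < 1) : HasSum (fun n => algebraMap R F (coeff n f) * x ^ n) (evalT f x) :=
  (summable_norm_evalT hR f hx).of_norm.hasSum

lemma evalT_X (x : F) : evalT (X : R⟦X⟧) x = x := by
  rw [evalT, tsum_eq_single 1 fun n hn => by simp [coeff_X, hn]]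
  simp

lemma evalT_one (x : F) : evalT (1 : R⟦X⟧) x = 1 := by
  rw [evalT, tsum_eq_single 0 fun n hn => by simp [coeff_one, hn]]
  simp

lemma evalT_sub [CompleteSpace F] (hR : ∀ a : R, ‖algebraMap R F a‖ ≤ 1) (f g : R⟦X⟧) {x : F}
    (hx : ‖x‖ < 1) : evalT (f - g) x = evalT f x - evalT g x := by
  rw [evalT]
  simp only [map_sub, sub_mul]
  exact ((hasSum_evalT hR f hx).sub (hasSum_evalT hR g hx)).tsum_eq

lemma evalT_mul [CompleteSpace F] (hR : ∀ a : R, ‖algebraMap R F a‖ ≤ 1) (f g : R⟦X⟧) {x : F}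
    (hx : ‖x‖ < 1) : evalT (f * g) x = evalT f x * evalT g x := by
  rw [evalT, evalT, evalT, tsum_mul_tsum_eq_tsum_sum_antidiagonal_of_summable_norm
    (summable_norm_evalT hR f hx) (summable_norm_evalT hR g hx)]
  refine tsum_congr fun n => ?_
  rw [coeff_mul, map_sum, Finset.sum_mul]
  refine Finset.sum_congr rfl fun kl hkl => ?_
  rw [← Finset.HasAntidiagonal.mem_antidiagonal.mp hkl, map_mul, pow_add]
  ring

lemma evalT_pow [CompleteSpace F] (hR : ∀ a : R, ‖algebraMap R F a‖ ≤ 1) (f : R⟦X⟧) {x : F}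
    (hx : ‖x‖ < 1) (k : ℕ) : evalT (f ^ k) x = evalT f x ^ k := by
  induction k with
  | zero => simpa using evalT_one x
  | succ k ih => rw [pow_succ, pow_succ, evalT_mul hR _ _ hx, ih]

lemma norm_evalT_le_norm [IsUltrametricDist F] (hR : ∀ a : R, ‖algebraMap R F a‖ ≤ 1) {f : R⟦X⟧}
    (hf : coeff 0 f = 0) {x : F} (hx : ‖x‖ ≤ 1) : ‖evalT f x‖ ≤ ‖x‖ := by
  refine IsUltrametricDist.norm_tsum_le_of_forall_le_of_nonneg (norm_nonneg x) fun n => ?_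
  rcases n with _ | n
  · simp [hf]
  · exact (norm_algebraMap_mul_pow_le hR _ x _).trans (pow_le_of_le_one (norm_nonneg x) hx
      n.succ_ne_zero)

lemma summable_uncurry_of_norm_le_pow {E : Type*} [NormedAddCommGroup E] [CompleteSpace E]
    {a : ℕ → ℕ → E} {s : ℝ} (hs : s < 1) (hle : ∀ m k, ‖a m k‖ ≤ s ^ m)
    (hzero : ∀ m k, m < k → a m k = 0) : Summable (Function.uncurry a) := by
  have hs0 : 0 ≤ s := by simpa using (norm_nonneg _).trans (hle 1 0)
  set r := Real.sqrt s
  have hr0 : 0 ≤ r := Real.sqrt_nonneg s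
  have hr1 : r < 1 := (Real.sqrt_lt_sqrt hs0 hs).trans_eq Real.sqrt_one
  have hbound (mk : ℕ × ℕ) : ‖Function.uncurry a mk‖ ≤ r ^ mk.1 * r ^ mk.2 := by
    obtain ⟨m, k⟩ := mk
    rcases lt_or_ge m k with h | h
    · rw [Function.uncurry_apply_pair, hzero m k h, norm_zero]
      positivity
    · calc ‖a m k‖ ≤ s ^ m := hle m k
        _ = r ^ (m + m) := by rw [← two_mul, pow_mul, Real.sq_sqrt hs0]
        _ ≤ r ^ (m + k) := pow_le_pow_of_le_one hr0 hr1.le (by omega)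
        _ = r ^ m * r ^ k := pow_add r m k
  have hgeom := summable_geometric_of_lt_one hr0 hr1
  exact .of_norm_bounded (hgeom.mul_of_nonneg hgeom (fun _ => by positivity)
    (fun _ => by positivity)) hbound

lemma coeff_pow_eq_zero_of_lt {g : R⟦X⟧} (hg : coeff 0 g = 0) {m k : ℕ} (h : m < k) :
    coeff m (g ^ k) = 0 :=
  coeff_of_lt_order m <| (Nat.cast_lt.mpr h).trans_le <|
    le_order_pow_of_constantCoeff_eq_zero k (by rwa [← coeff_zero_eq_constantCoeff_apply])

lemma evalT_compPS [CompleteSpace F]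
    (hR : ∀ a : R, ‖algebraMap R F a‖ ≤ 1) (f : R⟦X⟧) {g : R⟦X⟧} (hg : coeff 0 g = 0) {x : F}
    (hx : ‖x‖ < 1) : evalT (compPS f g) x = evalT f (evalT g x) := by
  -- `A m k` is the contribution of `f_k g^k` to the coefficient of `x^m`.
  set A : ℕ → ℕ → F := fun m k =>
    algebraMap R F (coeff k f) * (algebraMap R F (coeff m (g ^ k)) * x ^ m)
  have hzero (m k : ℕ) (h : m < k) : A m k = 0 := by simp [A, coeff_pow_eq_zero_of_lt hg h]
  have hA : Summable (Function.uncurry A) := by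
    refine summable_uncurry_of_norm_le_pow hx (fun m k => ?_) hzero
    rw [norm_mul]
    exact (mul_le_of_le_one_left (norm_nonneg _) (hR _)).trans
      (norm_algebraMap_mul_pow_le hR _ x m)
  have hrow (m : ℕ) : ∑' k, A m k = algebraMap R F (coeff m (compPS f g)) * x ^ m := by
    rw [tsum_eq_sum (s := Finset.range (m + 1)) fun k hk =>
      hzero m k (by simpa [Nat.lt_succ_iff] using hk), compPS, coeff_mk, map_sum, Finset.sum_mul]
    refine Finset.sum_congr rfl fun k _ => ?_
    simp only [A, map_mul]
    ring
  have hcol (k : ℕ) : ∑' m, A m k = algebraMap R F (coeff k f) * evalT g x ^ k := by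
    rw [tsum_mul_left, ← evalT_pow hR g hx, evalT]
  calc evalT (compPS f g) x = ∑' m, ∑' k, A m k := by simp only [evalT, hrow]
    _ = ∑' k, ∑' m, A m k := hA.tsum_comm.symm
    _ = evalT f (evalT g x) := by simp only [evalT, hcol]

lemma coeff_zero_iterPS {u : R⟦X⟧} (hu : coeff 0 u = 0) (m : ℕ) : coeff 0 (iterPS u m) = 0 := by
  cases m <;> simp [iterPS, compPS, hu]

lemma evalT_iterPS [CompleteSpace F]
    (hR : ∀ a : R, ‖algebraMap R F a‖ ≤ 1) {u : R⟦X⟧} (hu : coeff 0 u = 0) {x : F}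
    (hx : ‖x‖ < 1) (m : ℕ) : evalT (iterPS u m) x = (fun z => evalT u z)^[m] x := by
  induction m with
  | zero => exact evalT_X x
  | succ m ih =>
    rw [iterPS, evalT_compPS hR u (coeff_zero_iterPS hu m) hx, ih, Function.iterate_succ_apply']

lemma evalT_map [CompleteSpace F] {E : Type*} [NormedField E] [Algebra R E]
    (hR : ∀ a : R, ‖algebraMap R F a‖ ≤ 1) (φ : F →ₐ[R] E) (hφ : Continuous φ) (f : R⟦X⟧)
    {x : F} (hx : ‖x‖ < 1) : evalT f (φ x) = φ (evalT f x) := by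
  refine HasSum.tsum_eq ?_
  simpa only [Function.comp_def, map_mul, map_pow, AlgHom.commutes] using
    (hasSum_evalT hR f hx).map φ hφ

lemma iterate_evalT_map [CompleteSpace F] [IsUltrametricDist F] {E : Type*} [NormedField E]
    [Algebra R E] (hR : ∀ a : R, ‖algebraMap R F a‖ ≤ 1) (φ : F →ₐ[R] E) (hφ : Continuous φ)
    {u : R⟦X⟧} (hu : coeff 0 u = 0) (m : ℕ) {x : F} (hx : ‖x‖ < 1) :
    (fun z => evalT u z)^[m] (φ x) = φ ((fun z => evalT u z)^[m] x) := by
  induction m generalizing x with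
  | zero => rfl
  | succ m ih =>
    simp only [Function.iterate_succ_apply]
    rw [evalT_map hR φ hφ u hx, ih ((norm_evalT_le_norm hR hu hx.le).trans_lt hx)]

lemma norm_evalT_iterate_sub_map [CompleteSpace F] [IsUltrametricDist F] {E : Type*}
    [NormedField E] [Algebra R E] (hR : ∀ a : R, ‖algebraMap R F a‖ ≤ 1) (φ : F →ₐ[R] E)
    (hφ : Isometry φ) (g : R⟦X⟧) {u : R⟦X⟧} (hu : coeff 0 u = 0) (m N : ℕ) (c : R) {x : F}
    (hx : ‖x‖ < 1) :
    ‖evalT g ((fun z => evalT u z)^[m] (φ x)) - (evalT g (φ x) + algebraMap R E c * φ x ^ N)‖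
      = ‖evalT g ((fun z => evalT u z)^[m] x) - (evalT g x + algebraMap R F c * x ^ N)‖ := by
  have hmx : ‖(fun z => evalT u z)^[m] x‖ < 1 := by
    rw [← evalT_iterPS hR hu hx]
    exact (norm_evalT_le_norm hR (coeff_zero_iterPS hu m) hx.le).trans_lt hx
  rw [iterate_evalT_map hR φ hφ.continuous hu m hx, evalT_map hR φ hφ.continuous g hmx,
    evalT_map hR φ hφ.continuous g hx, ← φ.commutes c, ← map_pow, ← map_mul, ← map_add,
    ← map_sub, hφ.norm_map_of_map_zero (map_zero φ)]

end Evaluation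

section Ultrametric

variable {F : Type*} [NormedField F] [IsUltrametricDist F]

lemma norm_le_iff_of_norm_sub_le {x y : F} {ε : ℝ} (h : ‖x - y‖ ≤ ε) : ‖x‖ ≤ ε ↔ ‖y‖ ≤ ε := by
  constructor <;> intro h'
  · simpa using (IsUltrametricDist.norm_add_le_max x (y - x)).trans
      (max_le h' (by rwa [norm_sub_rev]))
  · simpa using (IsUltrametricDist.norm_add_le_max (x - y) y).trans (max_le h h')

lemma norm_add₃_le_of_le {x y z : F} {ε : ℝ} (hx : ‖x‖ ≤ ε) (hy : ‖y‖ ≤ ε) (hz : ‖z‖ ≤ ε) :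
    ‖x + y + z‖ ≤ ε :=
  (IsUltrametricDist.norm_add_le_max _ _).trans <|
    max_le ((IsUltrametricDist.norm_add_le_max _ _).trans (max_le hx hy)) hz

lemma norm_pow_sub_pow_le (x y : F) {r : ℝ} (hx : ‖x‖ ≤ r) (hy : ‖y‖ ≤ r) (n : ℕ) :
    ‖x ^ n - y ^ n‖ ≤ ‖x - y‖ * r ^ (n - 1) := by
  have hr0 : 0 ≤ r := (norm_nonneg x).trans hx
  rw [← geom_sum₂_mul, norm_mul, mul_comm]
  gcongr
  refine IsUltrametricDist.norm_sum_le_of_forall_le_of_nonneg (pow_nonneg hr0 _) fun i hi => ?_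
  rw [norm_mul, norm_pow, norm_pow]
  calc ‖x‖ ^ i * ‖y‖ ^ (n - 1 - i) ≤ r ^ i * r ^ (n - 1 - i) :=
      mul_le_mul (pow_le_pow_left₀ (norm_nonneg x) hx i) (pow_le_pow_left₀ (norm_nonneg y) hy _)
        (by positivity) (pow_nonneg hr0 i)
    _ = r ^ (n - 1) := by
      rw [← pow_add, Nat.add_sub_cancel' (Nat.le_sub_one_of_lt (Finset.mem_range.mp hi))]

lemma norm_iterate_sub_le {T : F → F} {x₀ d : F} {s ε : ℝ} (hd : ‖d‖ ≤ s) (hε : 0 ≤ ε)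
    (hεs : ε ≤ s) (hT : ∀ z, ‖z - x₀‖ ≤ s → ‖T z - z - d‖ ≤ ε) (j : ℕ) :
    ‖T^[j] x₀ - (x₀ + j * d)‖ ≤ ε := by
  induction j with
  | zero => simpa using hε
  | succ j ih =>
    set z := T^[j] x₀
    have hz : ‖z - x₀‖ ≤ s := by
      rw [show z - x₀ = (z - (x₀ + j * d)) + j * d by ring]
      refine (IsUltrametricDist.norm_add_le_max _ _).trans (max_le (ih.trans hεs) ?_)
      rw [norm_mul]
      exact mul_le_of_le_one_left (norm_nonneg _) (IsUltrametricDist.norm_natCast_le_one F j)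
        |>.trans hd
    rw [Function.iterate_succ_apply', show T z - (x₀ + (j + 1 : ℕ) * d)
      = (z - (x₀ + j * d)) + (T z - z - d) by push_cast; ring]
    exact (IsUltrametricDist.norm_add_le_max _ _).trans (max_le ih (hT z hz))

variable {R : Type*} [CommRing R] [Algebra R F] [CompleteSpace F]

lemma norm_evalT_sub_evalT_sub_le (hR : ∀ a : R, ‖algebraMap R F a‖ ≤ 1) (f : R⟦X⟧) {r : ℝ}
    (hr : r < 1) {z y : F} (hz : ‖z‖ ≤ r) (hy : ‖y‖ ≤ r) :
    ‖evalT f z - evalT f y - algebraMap R F (coeff 1 f) * (z - y)‖ ≤ r * ‖z - y‖ := by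
  have hr0 : 0 ≤ r := (norm_nonneg z).trans hz
  have hsum := ((hasSum_evalT hR f (hz.trans_lt hr)).sub (hasSum_evalT hR f (hy.trans_lt hr))).sub
    (hasSum_ite_eq 1 (algebraMap R F (coeff 1 f) * (z - y)))
  rw [← hsum.tsum_eq]
  refine IsUltrametricDist.norm_tsum_le_of_forall_le_of_nonneg (by positivity) fun n => ?_
  match n with
  | 0 => simpa using by positivity
  | 1 => simpa [mul_sub] using by positivity
  | n + 2 =>
    rw [if_neg (by omega), sub_zero, ← mul_sub, norm_mul]
    calc ‖algebraMap R F (coeff (n + 2) f)‖ * ‖z ^ (n + 2) - y ^ (n + 2)‖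
        ≤ 1 * (‖z - y‖ * r ^ (n + 1)) :=
          mul_le_mul (hR _) (norm_pow_sub_pow_le z y hz hy _) (norm_nonneg _) zero_le_one
      _ ≤ r * ‖z - y‖ := by
          rw [one_mul, mul_comm]
          gcongr
          exact pow_le_of_le_one hr0 hr.le n.succ_ne_zero

lemma norm_evalT_sub_leading_le (hR : ∀ a : R, ‖algebraMap R F a‖ ≤ 1) {f : R⟦X⟧} {N : ℕ}
    {r : ℝ} (hr : r < 1) (hf : coeff 0 f = 0)
    (hlow : ∀ i < N, ‖algebraMap R F (coeff i f)‖ ≤ r ^ N) {z : F} (hz : ‖z‖ ≤ r) :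
    ‖evalT f z - algebraMap R F (coeff N f) * z ^ N‖ ≤ r ^ (N + 1) := by
  have hr0 : 0 ≤ r := (norm_nonneg z).trans hz
  have hsum := (hasSum_evalT hR f (hz.trans_lt hr)).sub
    (hasSum_ite_eq N (algebraMap R F (coeff N f) * z ^ N))
  rw [← hsum.tsum_eq]
  refine IsUltrametricDist.norm_tsum_le_of_forall_le_of_nonneg (by positivity) fun i => ?_
  rcases lt_trichotomy i N with hi | rfl | hi
  · rw [if_neg hi.ne, sub_zero]
    rcases i with _ | i
    · simpa [hf] using by positivity
    calc ‖algebraMap R F (coeff (i + 1) f) * z ^ (i + 1)‖ ≤ r ^ N * r ^ (i + 1) := by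
          rw [norm_mul, norm_pow]
          exact mul_le_mul (hlow _ hi) (pow_le_pow_left₀ (norm_nonneg z) hz _) (by positivity)
            (by positivity)
      _ ≤ r ^ (N + 1) := by
          rw [← pow_add]
          exact pow_le_pow_of_le_one hr0 hr.le (by omega)
  · simpa using by positivity
  · rw [if_neg hi.ne', sub_zero]
    exact (norm_algebraMap_mul_pow_le hR _ z i).trans <|
      (pow_le_pow_left₀ (norm_nonneg z) hz i).trans (pow_le_pow_of_le_one hr0 hr.le hi)

end Ultrametric

namespace PadicInt

variable {p : ℕ} [Fact p.Prime]

lemma norm_le_inv_of_not_isUnit {a : ℤ_[p]} (h : ¬IsUnit a) : ‖a‖ ≤ (p : ℝ)⁻¹ := by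
  simpa using (norm_lt_pow_iff_norm_le_pow_sub_one a 0).mp (by simpa using not_isUnit_iff.mp h)

lemma norm_le_iff_not_isUnit {a : ℤ_[p]} {r : ℝ} (hpr : (p : ℝ)⁻¹ ≤ r) (hr : r < 1) :
    ‖a‖ ≤ r ↔ ¬IsUnit a :=
  ⟨fun h => not_isUnit_iff.mpr (h.trans_lt hr), fun h => (norm_le_inv_of_not_isUnit h).trans hpr⟩

lemma existsUnique_not_isUnit_natCast_mul_sub {a c : ℤ_[p]} (ha : IsUnit a) (hc : IsUnit c) :
    ∃! j : ℕ, (1 ≤ j ∧ j ≤ p - 1) ∧ ¬IsUnit ((j : ℤ_[p]) * a - c) := by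
  have hp : 0 < p := (Fact.out : p.Prime).pos
  have : NeZero p := ⟨hp.ne'⟩
  have ha' : toZMod a ≠ 0 := (ha.map toZMod).ne_zero
  set r : ZMod p := toZMod c / toZMod a
  have hr : r ≠ 0 := div_ne_zero (hc.map toZMod).ne_zero ha'
  have hiff (j : ℕ) : ¬IsUnit ((j : ℤ_[p]) * a - c) ↔ (j : ZMod p) = r := by
    rw [← mem_nonunits_iff, ← IsLocalRing.mem_maximalIdeal, ← ker_toZMod, RingHom.mem_ker,
      map_sub, map_mul, map_natCast, sub_eq_zero, eq_div_iff ha']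
  refine ⟨r.val, ⟨⟨?_, ?_⟩, (hiff _).mpr (ZMod.natCast_zmod_val r)⟩, ?_⟩
  · exact Nat.one_le_iff_ne_zero.mpr ((ZMod.val_ne_zero r).mpr hr)
  · have := r.val_lt
    omega
  · rintro j ⟨⟨-, hjp⟩, hj⟩
    rw [← (hiff j).mp hj, ZMod.val_cast_of_lt (by omega)]

end PadicInt

lemma norm_algebraMap_padicInt {p : ℕ} [Fact p.Prime] {K : Type*} [NormedField K]
    [Algebra ℚ_[p] K] [Algebra ℤ_[p] K] [IsScalarTower ℤ_[p] ℚ_[p] K]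
    (hK : ∀ x : ℚ_[p], ‖algebraMap ℚ_[p] K x‖ = ‖x‖) (a : ℤ_[p]) :
    ‖algebraMap ℤ_[p] K a‖ = ‖a‖ := by
  rw [IsScalarTower.algebraMap_apply ℤ_[p] ℚ_[p] K, hK]
  rfl

lemma IntermediateField.completeSpace_adjoin_simple {𝕜 K : Type*} [NontriviallyNormedField 𝕜]
    [CompleteSpace 𝕜] [NormedField K] [Algebra 𝕜 K]
    (hK : ∀ x : 𝕜, ‖algebraMap 𝕜 K x‖ = ‖x‖) {π : K} (hπ : IsIntegral 𝕜 π) :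
    CompleteSpace (adjoin 𝕜 {π}) := by
  let _ : NormedSpace 𝕜 K := ⟨fun a x => le_of_eq (by rw [Algebra.smul_def, norm_mul, hK])⟩
  have := adjoin.finiteDimensional hπ
  exact FiniteDimensional.complete 𝕜 (adjoin 𝕜 {π})

section Orbit

variable {p : ℕ} [Fact p.Prime] {F : Type*} [NormedField F] [IsUltrametricDist F]
  [CompleteSpace F] [Algebra ℤ_[p] F]

lemma norm_iterate_evalT_sub_le (hF : ∀ a : ℤ_[p], ‖algebraMap ℤ_[p] F a‖ = ‖a‖)
    {u w : ℤ_[p]⟦X⟧} (hu : coeff 0 u = 0) {q N : ℕ} (hw : w = iterPS u q - X) (hN : 1 < N)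
    (hwlt : ∀ i < N, ¬IsUnit (coeff i w)) {π : F} (hπ : ‖π‖ < 1)
    (hpπ : (p : ℝ)⁻¹ ≤ ‖π‖ ^ N) (j : ℕ) :
    ‖(fun z => evalT u z)^[j * q] π - (π + j * (algebraMap ℤ_[p] F (coeff N w) * π ^ N))‖
      ≤ ‖π‖ ^ (N + 1) := by
  have hR (a : ℤ_[p]) : ‖algebraMap ℤ_[p] F a‖ ≤ 1 := (hF a).trans_le (PadicInt.norm_le_one a)
  set t := ‖π‖
  have ht0 : 0 ≤ t := norm_nonneg π
  have hw0 : coeff 0 w = 0 := by rw [hw, map_sub, coeff_zero_iterPS hu, coeff_zero_X, sub_zero]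
  have hlow (i : ℕ) (hi : i < N) : ‖algebraMap ℤ_[p] F (coeff i w)‖ ≤ t ^ N := by
    rw [hF]
    exact (PadicInt.norm_le_inv_of_not_isUnit (hwlt i hi)).trans hpπ
  have hstep (z : F) (hz : ‖z - π‖ ≤ t ^ N) : ‖(fun z => evalT u z)^[q] z - z
      - algebraMap ℤ_[p] F (coeff N w) * π ^ N‖ ≤ t ^ (N + 1) := by
    have hzt : ‖z‖ ≤ t :=
      (norm_le_iff_of_norm_sub_le (hz.trans (pow_le_of_le_one ht0 hπ.le (by omega)))).mpr le_rfl
    have hwz : evalT w z = (fun z => evalT u z)^[q] z - z := by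
      rw [hw, evalT_sub hR _ _ (hzt.trans_lt hπ), evalT_iterPS hR hu (hzt.trans_lt hπ), evalT_X]
    set b := algebraMap ℤ_[p] F (coeff N w)
    set w₁ := algebraMap ℤ_[p] F (coeff 1 w)
    rw [← hwz, show evalT w z - b * π ^ N = (evalT w z - evalT w π - w₁ * (z - π))
      + w₁ * (z - π) + (evalT w π - b * π ^ N) by ring]
    refine norm_add₃_le_of_le ?_ ?_ (norm_evalT_sub_leading_le hR hπ hw0 hlow le_rfl)
    · calc _ ≤ t * ‖z - π‖ := norm_evalT_sub_evalT_sub_le hR w hπ hzt le_rfl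
        _ ≤ t * t ^ N := by gcongr
        _ = t ^ (N + 1) := by ring
    · rw [norm_mul]
      calc ‖w₁‖ * ‖z - π‖ ≤ t ^ N * t ^ N :=
            mul_le_mul (hlow 1 hN) hz (norm_nonneg _) (by positivity)
        _ ≤ t ^ (N + 1) := by
            rw [← pow_add]
            exact pow_le_pow_of_le_one ht0 hπ.le (by omega)
  rw [mul_comm j q, Function.iterate_mul]
  exact norm_iterate_sub_le (norm_algebraMap_mul_pow_le hR _ π N) (by positivity)
    (pow_le_pow_of_le_one ht0 hπ.le (by omega)) hstep j

lemma norm_evalT_iterate_sub_le_iff (hF : ∀ a : ℤ_[p], ‖algebraMap ℤ_[p] F a‖ = ‖a‖)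
    (g : ℤ_[p]⟦X⟧) {u w : ℤ_[p]⟦X⟧} (hu : coeff 0 u = 0) {q N : ℕ} (hw : w = iterPS u q - X)
    (hN : 1 < N) (hwlt : ∀ i < N, ¬IsUnit (coeff i w)) {π : F} (hπ0 : π ≠ 0) (hπ : ‖π‖ < 1)
    (hpπ : (p : ℝ)⁻¹ ≤ ‖π‖ ^ N) (c : ℤ_[p]) (j : ℕ) :
    ‖evalT g ((fun z => evalT u z)^[j * q] π) - (evalT g π + algebraMap ℤ_[p] F c * π ^ N)‖
      ≤ ‖π‖ ^ (N + 1) ↔ ¬IsUnit ((j : ℤ_[p]) * (coeff 1 g * coeff N w) - c) := by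
  have hR (a : ℤ_[p]) : ‖algebraMap ℤ_[p] F a‖ ≤ 1 := (hF a).trans_le (PadicInt.norm_le_one a)
  set t := ‖π‖
  have ht0 : 0 < t := norm_pos_iff.mpr hπ0
  set ζ := (fun z => evalT u z)^[j * q] π
  set b := algebraMap ℤ_[p] F (coeff N w)
  set g₁ := algebraMap ℤ_[p] F (coeff 1 g)
  have hζ := norm_iterate_evalT_sub_le hF hu hw hN hwlt hπ hpπ j
  have hζπ : ‖ζ - π‖ ≤ t ^ N := by
    rw [← sub_sub] at hζ
    refine (norm_le_iff_of_norm_sub_le (hζ.trans (pow_le_pow_of_le_one ht0.le hπ.le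
      N.le_succ))).mpr ?_
    rw [norm_mul]
    exact (mul_le_of_le_one_left (norm_nonneg _)
      (IsUltrametricDist.norm_natCast_le_one F j)).trans (norm_algebraMap_mul_pow_le hR _ π N)
  have hζt : ‖ζ‖ ≤ t :=
    (norm_le_iff_of_norm_sub_le (hζπ.trans (pow_le_of_le_one ht0.le hπ.le (by omega)))).mpr le_rfl
  set e := (j : ℤ_[p]) * (coeff 1 g * coeff N w) - c
  have hmain : ‖(evalT g ζ - (evalT g π + algebraMap ℤ_[p] F c * π ^ N))
      - algebraMap ℤ_[p] F e * π ^ N‖ ≤ t ^ (N + 1) := by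
    rw [show (evalT g ζ - (evalT g π + algebraMap ℤ_[p] F c * π ^ N))
        - algebraMap ℤ_[p] F e * π ^ N
        = (evalT g ζ - evalT g π - g₁ * (ζ - π)) + g₁ * (ζ - (π + j * (b * π ^ N))) by
      simp only [e, map_sub, map_mul, map_natCast, g₁, b]; ring]
    refine (IsUltrametricDist.norm_add_le_max _ _).trans (max_le ?_ ?_)
    · calc _ ≤ t * ‖ζ - π‖ := norm_evalT_sub_evalT_sub_le hR g hπ hζt le_rfl
        _ ≤ t * t ^ N := by gcongr
        _ = t ^ (N + 1) := by ring
    · rw [norm_mul]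
      exact mul_le_of_le_one_left (norm_nonneg _) (hR _) |>.trans hζ
  rw [norm_le_iff_of_norm_sub_le hmain, norm_mul, hF, norm_pow, pow_succ, mul_comm (t ^ N),
    mul_le_mul_iff_of_pos_right (pow_pos ht0 N)]
  exact PadicInt.norm_le_iff_not_isUnit (hpπ.trans (pow_le_of_le_one ht0.le hπ.le (by omega))) hπ

theorem existsUnique_norm_evalT_iterate_sub_le (hF : ∀ a : ℤ_[p], ‖algebraMap ℤ_[p] F a‖ = ‖a‖)
    {g : ℤ_[p]⟦X⟧} (hg : IsUnit (coeff 1 g)) {u w : ℤ_[p]⟦X⟧} (hu : coeff 0 u = 0) {q N : ℕ}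
    (hw : w = iterPS u q - X) (hN : 1 < N) (hwN : IsUnit (coeff N w))
    (hwlt : ∀ i < N, ¬IsUnit (coeff i w)) {π : F} (hπ0 : π ≠ 0) (hπ : ‖π‖ < 1)
    (hpπ : (p : ℝ)⁻¹ ≤ ‖π‖ ^ N) {c : ℤ_[p]} (hc : IsUnit c) :
    ∃! j : ℕ, (1 ≤ j ∧ j ≤ p - 1) ∧
      ‖evalT g ((fun z => evalT u z)^[j * q] π) - (evalT g π + algebraMap ℤ_[p] F c * π ^ N)‖
        ≤ ‖π‖ ^ (N + 1) := by
  simp only [norm_evalT_iterate_sub_le_iff hF g hu hw hN hwlt hπ0 hπ hpπ]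
  exact PadicInt.existsUnique_not_isUnit_natCast_mul_sub (hg.mul hwN) hc

end Orbit

theorem stmt_14_general (p : ℕ) [Fact p.Prime]
    {K : Type*} [NormedField K] [IsUltrametricDist K]
    [Algebra ℚ_[p] K] [Algebra ℤ_[p] K] [IsScalarTower ℤ_[p] ℚ_[p] K]
    [IsAlgClosure ℚ_[p] K]
    (hK : ∀ x : ℚ_[p], ‖algebraMap ℚ_[p] K x‖ = ‖x‖)
    -- `g` is invertible under composition
    (g : PowerSeries ℤ_[p])
    (hg1 : IsUnit (PowerSeries.coeff 1 g))
    (u : PowerSeries ℤ_[p])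
    (hu0 : PowerSeries.coeff 0 u = 0)
    (δ n : ℕ) (hδ : δ = if p = 2 then 2 else 1) (hnδ : δ ≤ n)
    (w : PowerSeries ℤ_[p]) (hw : w = iterPS u (p ^ (n - δ)) - PowerSeries.X)
    (hwideg : IsUnit (PowerSeries.coeff (p ^ n) w))
    (hwlt : ∀ i < p ^ n, ¬ IsUnit (PowerSeries.coeff i w))
    (π : K) (hπv : ‖π‖ ^ ((p - 1) * p ^ n) = (p : ℝ)⁻¹)
    (c : ℤ_[p]) (hc : IsUnit c) :
    -- there is a unique `1 ≤ j ≤ p-1` with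
    -- `g(u^{∘jp^{n-δ}}(π)) - g(π) ≡ c π^{p^n} mod π^{p^n + 1}`
    ∃! j : ℕ, (1 ≤ j ∧ j ≤ p - 1) ∧
      ‖evalT g ((fun x => evalT u x)^[j * p ^ (n - δ)] π) -
          (evalT g π + algebraMap ℤ_[p] K c * π ^ (p ^ n))‖ ≤ ‖π‖ ^ (p ^ n + 1) := by
  have hp : 1 < p := (Fact.out : p.Prime).one_lt
  have hN : 1 < p ^ n := Nat.one_lt_pow (by split_ifs at hδ <;> omega) hp
  have hm : (p - 1) * p ^ n ≠ 0 := Nat.mul_ne_zero (by omega) (by positivity)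
  have hπ0 : π ≠ 0 := by
    rintro rfl
    rw [norm_zero, zero_pow hm, eq_comm, _root_.inv_eq_zero, Nat.cast_eq_zero] at hπv
    omega
  have hπ1 : ‖π‖ < 1 := (pow_lt_one_iff_of_nonneg (norm_nonneg π) hm).mp
    (hπv ▸ inv_lt_one_of_one_lt₀ (by exact_mod_cast hp))
  have hpπ : (p : ℝ)⁻¹ ≤ ‖π‖ ^ p ^ n :=
    hπv ▸ pow_le_pow_of_le_one (norm_nonneg π) hπ1.le (Nat.le_mul_of_pos_left _ (by omega))
  set L := IntermediateField.adjoin ℚ_[p] {π}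
  have : CompleteSpace L :=
    IntermediateField.completeSpace_adjoin_simple hK (Algebra.IsIntegral.isIntegral π)
  have hL : ∀ a : ℤ_[p], ‖algebraMap ℤ_[p] L a‖ = ‖a‖ := norm_algebraMap_padicInt fun x => hK x
  have hφ : Isometry (L.val.restrictScalars ℤ_[p]) := isometry_subtype_coe
  set π' : L := IntermediateField.AdjoinSimple.gen ℚ_[p] π
  rw [show π = L.val.restrictScalars ℤ_[p] π' from rfl]
  simp only [norm_evalT_iterate_sub_map (fun a => (hL a).trans_le (PadicInt.norm_le_one a)) _ hφ
    g hu0 _ _ c (show ‖π'‖ < 1 from hπ1), hφ.norm_map_of_map_zero (map_zero _)]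
  exact existsUnique_norm_evalT_iterate_sub_le hL hg1 hu0 hw hN hwideg hwlt
    (π := π') (Subtype.coe_ne_coe.mp hπ0) hπ1 hpπ hc

theorem stmt_14 (p : ℕ) [Fact p.Prime]
    {K : Type*} [NormedField K] [IsUltrametricDist K]
    [Algebra ℚ_[p] K] [Algebra ℤ_[p] K] [IsScalarTower ℤ_[p] ℚ_[p] K]
    [IsAlgClosure ℚ_[p] K]
    (hK : ∀ x : ℚ_[p], ‖algebraMap ℚ_[p] K x‖ = ‖x‖)
    -- `g` is invertible under composition
    (g : PowerSeries ℤ_[p])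
    (hg0 : PowerSeries.coeff 0 g = 0)
    (hg1 : IsUnit (PowerSeries.coeff 1 g))
    (u : PowerSeries ℤ_[p])
    (hu0 : PowerSeries.coeff 0 u = 0)
    (huinv : IsUnit (PowerSeries.coeff 1 u))
    (δ n : ℕ) (hδ : δ = if p = 2 then 2 else 1) (hnδ : δ ≤ n)
    (w : PowerSeries ℤ_[p]) (hw : w = iterPS u (p ^ (n - δ)) - PowerSeries.X)
    (hwideg : IsUnit (PowerSeries.coeff (p ^ n) w))
    (hwlt : ∀ i < p ^ n, ¬ IsUnit (PowerSeries.coeff i w))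
    (π : K) (hπ0 : π ≠ 0) (hπv : ‖π‖ ^ ((p - 1) * p ^ n) = (p : ℝ)⁻¹)
    (c : ℤ_[p]) (hc : IsUnit c) :
    -- there is a unique `1 ≤ j ≤ p-1` with
    -- `g(u^{∘jp^{n-δ}}(π)) - g(π) ≡ c π^{p^n} mod π^{p^n + 1}`
    ∃! j : ℕ, (1 ≤ j ∧ j ≤ p - 1) ∧
      ‖evalT g ((fun x => evalT u x)^[j * p ^ (n - δ)] π) -
          (evalT g π + algebraMap ℤ_[p] K c * π ^ (p ^ n))‖ ≤ ‖π‖ ^ (p ^ n + 1) :=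
  stmt_14_general p hK g hg1 u hu0 δ n hδ hnδ w hw hwideg hwlt π hπv c hc

end
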